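/- arXiv:1303.3083 — 2 statements merged into one kernel-verified Lean document; each statement's English description precedes it below -/
import Mathlib

section
/- Switching Isomorphism Corollary: Two signed simple graphs Σ₁ = (Γ₁, σ₁) and Σ₂ = (Γ₂, σ₂) are switching isomorphic (i.e., Σ₂ is isomorphic, as a signed graph, to some switching of Σ₁) if and only if there is a graph isomorphism φ : Γ₁ → Γ₂ that preserves the signs of cycles, i.e., for every cycle C of Γ₁ the σ₁-sign of C equals the σ₂-sign of the image cycle φ(C). -/
/-!
Transporting `σ₂` along `φ` leaves one graph with two signatures `σ` and `τ`. Switching by `θ`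
multiplies the sign of a closed walk at `u` by `θ u ^ 2 = 1`, so it preserves cycle signs.
Conversely, if `σ` and `τ` agree on cycles, then `ρ = σ τ` is positive on every cycle, hence on
every closed walk (bypassing a closed walk only removes cycles and edges traversed back and
forth). So the `ρ`-sign `θ v` of a walk from a base point of the component of `v` to `v` is
well defined, `ρ (v w) = θ v θ w`, and `τ` is `σ` switched by `θ`.
-/

open SimpleGraph

namespace SimpleGraph.Walk

variable {V W : Type*} {G : SimpleGraph V} {u v w : V}

def sign (σ : Sym2 V → ℤ) (p : G.Walk u v) : ℤ := (p.edges.map σ).prod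

variable (σ : Sym2 V → ℤ)

@[simp] lemma sign_nil : (nil : G.Walk u u).sign σ = 1 := rfl

@[simp] lemma sign_cons (h : G.Adj u v) (p : G.Walk v w) :
    (cons h p).sign σ = σ s(u, v) * p.sign σ := rfl

@[simp] lemma sign_append {x : V} (p : G.Walk u v) (q : G.Walk v x) :
    (p.append q).sign σ = p.sign σ * q.sign σ := by
  simp [sign, edges_append]

@[simp] lemma sign_reverse (p : G.Walk u v) : p.reverse.sign σ = p.sign σ := by
  simp [sign, edges_reverse, List.prod_reverse]

@[simp] lemma sign_copy {u' v' : V} (p : G.Walk u v) (hu : u = u') (hv : v = v') :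
    (p.copy hu hv).sign σ = p.sign σ := by
  subst hu hv; rfl

lemma sign_map {G' : SimpleGraph W} (f : G →g G') (σ' : Sym2 W → ℤ) (p : G.Walk u v) :
    (p.map f).sign σ' = p.sign (fun e => σ' (e.map f)) := by
  simp [sign, edges_map, Function.comp_def]

lemma sign_mul (τ : Sym2 V → ℤ) (p : G.Walk u v) :
    p.sign (fun e => σ e * τ e) = p.sign σ * p.sign τ :=
  List.prod_map_mul

variable {σ}

lemma sign_eq_one_or_neg_one (hσ : ∀ e ∈ G.edgeSet, σ e = 1 ∨ σ e = -1) (p : G.Walk u v) :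
    p.sign σ = 1 ∨ p.sign σ = -1 := by
  simp only [← Int.isUnit_iff] at hσ ⊢
  induction p with
  | nil => exact isUnit_one
  | cons h p ih => exact (hσ _ h).mul ih

lemma sign_mul_self (hσ : ∀ e ∈ G.edgeSet, σ e = 1 ∨ σ e = -1) (p : G.Walk u v) :
    p.sign σ * p.sign σ = 1 :=
  mul_self_eq_one_iff.mpr (sign_eq_one_or_neg_one hσ p)

section Balanced

variable (hσ : ∀ e ∈ G.edgeSet, σ e = 1 ∨ σ e = -1)
  (hcycle : ∀ (v : V) (c : G.Walk v v), c.IsCycle → c.sign σ = 1)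
include hσ hcycle

/-- If `cons h p` is not a cycle, then `p` is the edge `h` traversed backwards. -/
lemma sign_cons_of_isPath (h : G.Adj u v) {p : G.Walk v u} (hp : p.IsPath) :
    (cons h p).sign σ = 1 := by
  by_cases he : s(u, v) ∈ p.edges
  · rw [hp.eq_adj_toWalk_of_mem_edges (Sym2.eq_swap ▸ he)]
    simpa [Sym2.eq_swap] using mul_self_eq_one_iff.mpr (hσ s(u, v) h)
  · exact hcycle u _ ((cons_isCycle_iff p h).mpr ⟨hp, he⟩)

/-- Bypassing only cuts out closed walks `cons h q` with `q` a path, which are positive. -/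
lemma sign_bypass [DecidableEq V] (p : G.Walk u v) : p.bypass.sign σ = p.sign σ := by
  induction p with
  | nil => rfl
  | @cons u x v h p ih =>
    dsimp only [bypass]
    split_ifs with hu
    · have hsplit := congrArg (sign σ) (p.bypass.take_spec hu)
      rw [sign_append] at hsplit
      calc (p.bypass.dropUntil u hu).sign σ
          = (cons h (p.bypass.takeUntil u hu)).sign σ * (p.bypass.dropUntil u hu).sign σ := by
            rw [sign_cons_of_isPath hσ hcycle h ((bypass_isPath p).takeUntil hu), one_mul]
        _ = (cons h p).sign σ := by rw [sign_cons, mul_assoc, hsplit, ih, sign_cons]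
    · rw [sign_cons, sign_cons, ih]

lemma sign_eq_one_of_balanced (c : G.Walk u u) : c.sign σ = 1 := by
  classical
  rw [← sign_bypass hσ hcycle, (isPath_iff_nil.mp (bypass_isPath c)).eq_nil, sign_nil]

end Balanced

lemma sign_eq_mul_of_switching {τ : Sym2 V → ℤ} {θ : V → ℤ} (hθ : ∀ v, θ v = 1 ∨ θ v = -1)
    (hτ : ∀ v w, G.Adj v w → τ s(v, w) = θ v * σ s(v, w) * θ w) (p : G.Walk u v) :
    p.sign τ = θ u * p.sign σ * θ v := by
  induction p with
  | nil => simpa using (mul_self_eq_one_iff.mpr (hθ _)).symm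
  | @cons u x v h p ih =>
    rw [sign_cons, sign_cons, ih, hτ u x h]
    linear_combination (θ u * σ s(u, x) * p.sign σ * θ v) * mul_self_eq_one_iff.mpr (hθ x)

end SimpleGraph.Walk

namespace SimpleGraph

variable {V : Type*} {G : SimpleGraph V} {σ τ : Sym2 V → ℤ}

section Balanced

variable (hσ : ∀ e ∈ G.edgeSet, σ e = 1 ∨ σ e = -1)
  (hcycle : ∀ (v : V) (c : G.Walk v v), c.IsCycle → c.sign σ = 1)
include hσ hcycle

lemma sign_edge_eq_of_balanced {u v w : V} (p : G.Walk u v) (q : G.Walk u w) (h : G.Adj v w) :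
    σ s(v, w) = p.sign σ * q.sign σ := by
  have hc := Walk.sign_eq_one_of_balanced hσ hcycle (p.append (Walk.cons h q.reverse))
  rw [Walk.sign_append, Walk.sign_cons, Walk.sign_reverse] at hc
  linear_combination (p.sign σ * q.sign σ) * hc - σ s(v, w) * p.sign_mul_self hσ
    - σ s(v, w) * p.sign σ * p.sign σ * q.sign_mul_self hσ

/-- Harary's theorem: a signature in which every cycle is positive switches to the all-positive
one, by the sign of a walk from a base point of each connected component. -/
theorem exists_switching_of_balanced :
    ∃ θ : V → ℤ, (∀ v, θ v = 1 ∨ θ v = -1) ∧ ∀ v w, G.Adj v w → σ s(v, w) = θ v * θ w := by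
  have hroot (v : V) : G.Reachable (G.connectedComponentMk v).out v :=
    ConnectedComponent.eq.mp (G.connectedComponentMk v).out_eq
  refine ⟨fun v => (hroot v).some.sign σ, fun v => Walk.sign_eq_one_or_neg_one hσ _,
    fun v w h => ?_⟩
  have hvw : (G.connectedComponentMk v).out = (G.connectedComponentMk w).out := by
    rw [ConnectedComponent.sound h.reachable]
  rw [sign_edge_eq_of_balanced hσ hcycle (hroot v).some
    ((hroot w).some.copy hvw.symm rfl) h, Walk.sign_copy]

end Balanced

theorem exists_switching_iff_forall_isCycle_sign_eq (hσ : ∀ e ∈ G.edgeSet, σ e = 1 ∨ σ e = -1)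
    (hτ : ∀ e ∈ G.edgeSet, τ e = 1 ∨ τ e = -1) :
    (∃ θ : V → ℤ, (∀ v, θ v = 1 ∨ θ v = -1) ∧
        ∀ v w, G.Adj v w → τ s(v, w) = θ v * σ s(v, w) * θ w) ↔
      ∀ (v : V) (c : G.Walk v v), c.IsCycle → c.sign σ = c.sign τ := by
  constructor
  · rintro ⟨θ, hθ, hsw⟩ v c -
    rw [Walk.sign_eq_mul_of_switching hθ hsw c]
    linear_combination (-c.sign σ) * mul_self_eq_one_iff.mpr (hθ v)
  · intro hcycle
    -- `σ * τ` is balanced, and switching it to `1` switches `σ` to `τ`.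
    have hστ : ∀ e ∈ G.edgeSet, σ e * τ e = 1 ∨ σ e * τ e = -1 := fun e he => by
      simpa only [← Int.isUnit_iff] using (Int.isUnit_iff.mpr (hσ e he)).mul
        (Int.isUnit_iff.mpr (hτ e he))
    obtain ⟨θ, hθ, hsw⟩ := exists_switching_of_balanced hστ fun v c hc => by
      rw [Walk.sign_mul, ← hcycle v c hc, c.sign_mul_self hσ]
    refine ⟨θ, hθ, fun v w h => ?_⟩
    linear_combination σ s(v, w) * hsw v w h - τ s(v, w) * mul_self_eq_one_iff.mpr (hσ s(v, w) h)

end SimpleGraph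

theorem switching_isomorphism_general {V₁ V₂ : Type*}
    (G₁ : SimpleGraph V₁) (G₂ : SimpleGraph V₂)
    (σ₁ : Sym2 V₁ → ℤ) (σ₂ : Sym2 V₂ → ℤ)
    (h₁ : ∀ e ∈ G₁.edgeSet, σ₁ e = 1 ∨ σ₁ e = -1)
    (h₂ : ∀ e ∈ G₂.edgeSet, σ₂ e = 1 ∨ σ₂ e = -1) :
    (∃ (φ : G₁ ≃g G₂) (θ : V₁ → ℤ), (∀ v, θ v = 1 ∨ θ v = -1) ∧
        ∀ v w : V₁, G₁.Adj v w → σ₂ s(φ v, φ w) = θ v * σ₁ s(v, w) * θ w) ↔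
      ∃ φ : G₁ ≃g G₂, ∀ (v : V₁) (w : G₁.Walk v v), w.IsCycle →
        (w.edges.map σ₁).prod = ((w.map φ.toHom).edges.map σ₂).prod := by
  refine exists_congr fun φ => ?_
  have hφσ₂ : ∀ e ∈ G₁.edgeSet, σ₂ (e.map φ.toHom) = 1 ∨ σ₂ (e.map φ.toHom) = -1 :=
    fun e he => h₂ _ ((Iso.map_mem_edgeSet_iff φ).mpr he)
  have h := exists_switching_iff_forall_isCycle_sign_eq h₁ hφσ₂
  simp only [← Walk.sign_map] at h
  exact h

/-- Switching Isomorphism: two signed simple graphs `(G₁, σ₁)` and `(G₂, σ₂)` are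
switching isomorphic (i.e., there is a graph isomorphism `φ : G₁ ≃g G₂` and a switching
function `θ : V₁ → {±1}` with `σ₂(φ(v)φ(w)) = θ(v)σ₁(vw)θ(w)` on every edge) iff there
is a graph isomorphism `φ : G₁ ≃g G₂` preserving the signs of cycles: for every cycle
`w` of `G₁`, the `σ₁`-sign of `w` equals the `σ₂`-sign of the image cycle `φ(w)`. -/
theorem switching_isomorphism {V₁ V₂ : Type*} [Fintype V₁] [Fintype V₂]
    (G₁ : SimpleGraph V₁) (G₂ : SimpleGraph V₂)
    (σ₁ : Sym2 V₁ → ℤ) (σ₂ : Sym2 V₂ → ℤ)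
    (h₁ : ∀ e ∈ G₁.edgeSet, σ₁ e = 1 ∨ σ₁ e = -1)
    (h₂ : ∀ e ∈ G₂.edgeSet, σ₂ e = 1 ∨ σ₂ e = -1) :
    (∃ (φ : G₁ ≃g G₂) (θ : V₁ → ℤ), (∀ v, θ v = 1 ∨ θ v = -1) ∧
        ∀ v w : V₁, G₁.Adj v w → σ₂ s(φ v, φ w) = θ v * σ₁ s(v, w) * θ w) ↔
      ∃ φ : G₁ ≃g G₂, ∀ (v : V₁) (w : G₁.Walk v v), w.IsCycle →
        (w.edges.map σ₁).prod = ((w.map φ.toHom).edges.map σ₂).prod :=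
  switching_isomorphism_general G₁ G₂ σ₁ σ₂ h₁ h₂
end

section
/- For a connected finite simple graph Γ and any sign function σ on its edges, the largest eigenvalue of the Kirchhoff matrix satisfies λ¹(K(Γ, σ)) ≤ λ¹(K(−Γ)), where −Γ is Γ with all edges signed −1, and equality holds if and only if (Γ, σ) is antibalanced. -/
open SimpleGraph
open scoped Classical

/-- A signed simple graph `(G, σ)` is balanced if every cycle is positive,
i.e., the product of the signs of its edges is `+1`. -/
def IsBalanced {V : Type*} (G : SimpleGraph V) (σ : Sym2 V → ℤ) : Prop :=
  ∀ ⦃v : V⦄ (w : G.Walk v v), w.IsCycle → (w.edges.map σ).prod = 1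

/-- The adjacency matrix of the signed simple graph `(G, σ)`. -/
noncomputable def signedAdj {V : Type*} [Fintype V] (G : SimpleGraph V)
    (σ : Sym2 V → ℤ) : Matrix V V ℝ :=
  Matrix.of fun i j => if G.Adj i j then (σ s(i, j) : ℝ) else 0

/-- The Kirchhoff matrix `K(Σ) = D(G) - A(Σ)`, where `D(G)` is the diagonal matrix of
vertex degrees of the underlying graph. -/
noncomputable def kirchhoff {V : Type*} [Fintype V] [DecidableEq V]
    (G : SimpleGraph V) (σ : Sym2 V → ℤ) : Matrix V V ℝ :=
  Matrix.diagonal (fun v => (Nat.card (G.neighborSet v) : ℝ)) - signedAdj G σ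

/-- The largest eigenvalue of a (real symmetric) matrix. -/
noncomputable def maxEigen {V : Type*} [Fintype V] (M : Matrix V V ℝ) : ℝ :=
  sSup {μ : ℝ | Module.End.HasEigenvalue M.mulVecLin μ}

/-!
The quadratic form of `K(Γ, σ)` at `x` is `∑ deg v · x_v² − ∑_{u ∼ v} σ(uv) x_u x_v`, which is
at most the form of `K(−Γ)` at `|x|`; hence `λ¹(K(Γ, σ)) ≤ λ¹(K(−Γ))`. If equality holds and `x`
is a top eigenvector of `K(Γ, σ)`, then `|x|` maximises the form of `K(−Γ)`, so it is a top
eigenvector of `K(−Γ)` and, on a connected graph, nowhere zero. Equality in every edge term then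
reads `−σ(uv) = sign x_u · sign x_v`, so `−Σ` is balanced. Conversely, `−Σ` is balanced iff
`−σ(uv) = θ_u θ_v` for some `θ : V → {±1}`, and conjugation by `diag θ` carries `K(Γ, σ)` to
`K(−Γ)`.
-/

namespace Matrix

variable {n : Type*} [Fintype n] [DecidableEq n] {M : Matrix n n ℝ}

theorem hasEigenvalue_mulVecLin_iff {μ : ℝ} :
    Module.End.HasEigenvalue M.mulVecLin μ ↔ μ ∈ spectrum ℝ M := by
  rw [Module.End.hasEigenvalue_iff_mem_spectrum, ← spectrum_toLin']
  rfl

theorem maxEigen_eq_sSup_spectrum : maxEigen M = sSup (spectrum ℝ M) := by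
  simp only [maxEigen, hasEigenvalue_mulVecLin_iff, Set.ofPred_mem_eq]

theorem maxEigen_conj {D : Matrix n n ℝ} (hD : D * D = 1) :
    maxEigen (D * M * D) = maxEigen M := by
  let u : (Matrix n n ℝ)ˣ := ⟨D, D, hD, hD⟩
  rw [maxEigen_eq_sSup_spectrum, maxEigen_eq_sSup_spectrum,
    show D * M * D = u * M * ↑u⁻¹ from rfl, spectrum.units_conjugate]

open scoped MatrixOrder in
theorem IsHermitian.posSemidef_maxEigen_smul_one_sub (hM : M.IsHermitian) :
    (maxEigen M • 1 - M).PosSemidef := by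
  rw [← Matrix.le_iff, ← Algebra.algebraMap_eq_smul_one,
    le_algebraMap_iff_spectrum_le (ha := hM.isSelfAdjoint)]
  intro μ hμ
  rw [maxEigen_eq_sSup_spectrum]
  exact le_csSup finite_real_spectrum.bddAbove hμ

theorem IsHermitian.dotProduct_mulVec_le (hM : M.IsHermitian) (x : n → ℝ) :
    x ⬝ᵥ M *ᵥ x ≤ maxEigen M * (x ⬝ᵥ x) := by
  have := hM.posSemidef_maxEigen_smul_one_sub.dotProduct_mulVec_nonneg x
  simp only [star_trivial, sub_mulVec, smul_mulVec, one_mulVec, dotProduct_sub,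
    dotProduct_smul, smul_eq_mul] at this
  linarith

theorem IsHermitian.mulVec_eq_of_dotProduct_mulVec_eq (hM : M.IsHermitian) {x : n → ℝ}
    (hx : x ⬝ᵥ M *ᵥ x = maxEigen M * (x ⬝ᵥ x)) : M *ᵥ x = maxEigen M • x := by
  have := (hM.posSemidef_maxEigen_smul_one_sub.dotProduct_mulVec_zero_iff x).mp
  simp only [star_trivial, sub_mulVec, smul_mulVec, one_mulVec, dotProduct_sub,
    dotProduct_smul, smul_eq_mul, hx, sub_self, sub_eq_zero, forall_const] at this
  exact this.symm

theorem IsHermitian.exists_mulVec_eq_maxEigen_smul [Nonempty n] (hM : M.IsHermitian) :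
    ∃ x ≠ 0, M *ᵥ x = maxEigen M • x := by
  have hmem : maxEigen M ∈ spectrum ℝ M := by
    rw [maxEigen_eq_sSup_spectrum, hM.spectrum_real_eq_range_eigenvalues]
    exact (Set.range_nonempty _).csSup_mem (Set.finite_range _)
  obtain ⟨x, hx, hx0⟩ := (hasEigenvalue_mulVecLin_iff.mpr hmem).exists_hasEigenvector
  exact ⟨x, hx0, Module.End.mem_eigenspace_iff.mp hx⟩

end Matrix

namespace SimpleGraph

variable {V : Type*} {G : SimpleGraph V}

theorem Reachable.induction_on_adj {P : V → Prop} (hP : ∀ ⦃u v⦄, G.Adj u v → P u → P v)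
    {u v : V} (huv : G.Reachable u v) (hu : P u) : P v := by
  obtain ⟨w⟩ := huv
  induction w with
  | nil => exact hu
  | cons h _ ih => exact ih (hP h hu)

namespace Walk

variable {M : Type*} [CommMonoid M] {τ : Sym2 V → M}

theorem prod_map_edges_mul_self (hτ : ∀ e ∈ G.edgeSet, τ e * τ e = 1) {u v : V}
    (p : G.Walk u v) : (p.edges.map τ).prod * (p.edges.map τ).prod = 1 := by
  rw [← List.prod_map_mul]
  exact List.prod_eq_one fun _ hx ↦ by
    obtain ⟨e, he, rfl⟩ := List.mem_map.mp hx
    exact hτ e (p.edges_subset_edgeSet he)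

theorem prod_map_edges_eq_of_potential {θ : V → M} (hθ : ∀ v, θ v * θ v = 1)
    (hpot : ∀ ⦃u v⦄, G.Adj u v → τ s(u, v) = θ u * θ v) {u v : V} (p : G.Walk u v) :
    (p.edges.map τ).prod = θ u * θ v := by
  induction p with
  | nil => exact (hθ _).symm
  | @cons u w v h p ih =>
    rw [edges_cons, List.map_cons, List.prod_cons, ih, hpot h, mul_assoc, ← mul_assoc (θ w),
      hθ, one_mul]

section Cycles

variable (hτ : ∀ e ∈ G.edgeSet, τ e * τ e = 1)
  (hcyc : ∀ ⦃v : V⦄ (c : G.Walk v v), c.IsCycle → (c.edges.map τ).prod = 1)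
include hτ hcyc

theorem prod_map_edges_cons_eq_one_of_isPath {u v : V} (h : G.Adj u v) {p : G.Walk v u}
    (hp : p.IsPath) : ((cons h p).edges.map τ).prod = 1 := by
  by_cases he : s(u, v) ∈ p.edges
  · rw [hp.eq_adj_toWalk_of_mem_edges (Sym2.eq_swap ▸ he)]
    simpa [Sym2.eq_swap] using hτ _ h
  · exact hcyc _ ((cons_isCycle_iff p h).mpr ⟨hp, he⟩)

theorem prod_map_edges_bypass [DecidableEq V] {u v : V} (p : G.Walk u v) :
    (p.bypass.edges.map τ).prod = (p.edges.map τ).prod := by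
  induction p with
  | nil => rfl
  | @cons u w v h p ih =>
    simp only [bypass]
    split_ifs with hu
    · have hloop := prod_map_edges_cons_eq_one_of_isPath hτ hcyc h
        (p.bypass_isPath.takeUntil hu)
      have hsplit := congrArg (fun q ↦ (q.edges.map τ).prod) (p.bypass.take_spec hu)
      simp only [edges_append, List.map_append, List.prod_append] at hsplit
      rw [edges_cons, List.map_cons, List.prod_cons] at hloop ⊢
      rw [← ih, ← hsplit, ← mul_assoc, hloop, one_mul]
    · rw [edges_cons, edges_cons, List.map_cons, List.map_cons, List.prod_cons,
        List.prod_cons, ih]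

theorem prod_map_edges_eq_one_of_closed {u : V} (c : G.Walk u u) :
    (c.edges.map τ).prod = 1 := by
  classical
  rw [← prod_map_edges_bypass hτ hcyc, isPath_iff_nil.mp c.bypass_isPath |>.eq_nil]
  rfl

end Cycles

end Walk

theorem isBalanced_iff_exists_potential {τ : Sym2 V → ℤ}
    (hτ : ∀ e ∈ G.edgeSet, τ e * τ e = 1) :
    IsBalanced G τ ↔ ∃ θ : V → ℤ, (∀ v, θ v * θ v = 1) ∧
      ∀ ⦃u v⦄, G.Adj u v → τ s(u, v) = θ u * θ v := by
  constructor
  · intro hbal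
    let root (v : V) : V := (G.connectedComponentMk v).out
    have hroot (v : V) : G.Reachable (root v) v :=
      ConnectedComponent.exact (Quot.out_eq (G.connectedComponentMk v))
    let path (v : V) : G.Walk (root v) v := (hroot v).some
    refine ⟨fun v ↦ ((path v).edges.map τ).prod,
      fun v ↦ (path v).prod_map_edges_mul_self hτ, fun u v h ↦ ?_⟩
    have hr : root u = root v := by
      simp only [root, ConnectedComponent.connectedComponentMk_eq_of_adj h]
    have hloop := Walk.prod_map_edges_eq_one_of_closed hτ hbal
      (((path u).append (.cons h (path v).reverse)).copy rfl hr.symm)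
    simp only [Walk.edges_copy, Walk.edges_append, Walk.edges_cons, Walk.edges_reverse,
      List.map_append, List.map_cons, List.map_reverse, List.prod_append, List.prod_cons,
      List.prod_reverse] at hloop
    set a := ((path u).edges.map τ).prod
    set b := ((path v).edges.map τ).prod
    have ha : a * a = 1 := (path u).prod_map_edges_mul_self hτ
    have hb : b * b = 1 := (path v).prod_map_edges_mul_self hτ
    linear_combination (-τ s(u, v)) * ha - τ s(u, v) * a * a * hb + a * b * hloop
  · rintro ⟨θ, hθ, hpot⟩ v c -
    rw [c.prod_map_edges_eq_of_potential hθ hpot, hθ]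

end SimpleGraph

section Kirchhoff

variable {V : Type*} [Fintype V] {G : SimpleGraph V} {σ : Sym2 V → ℤ}

open Matrix

theorem signedAdj_isHermitian (G : SimpleGraph V) (σ : Sym2 V → ℤ) :
    (signedAdj G σ).IsHermitian := by
  ext i j
  simp [signedAdj, G.adj_comm, Sym2.eq_swap]

theorem abs_mul_signedAdj_allNeg_mul_abs_le (hσ : ∀ e ∈ G.edgeSet, σ e = 1 ∨ σ e = -1)
    (x : V → ℝ) (i j : V) :
    |x i| * signedAdj G (fun _ ↦ -1) i j * |x j| ≤ x i * signedAdj G σ i j * x j := by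
  simp only [signedAdj, of_apply]
  split_ifs with h
  · rcases hσ _ (G.mem_edgeSet.mpr h) with h1 | h1 <;> rw [h1] <;> push_cast <;>
      nlinarith [neg_abs_le (x i * x j), le_abs_self (x i * x j), abs_mul (x i) (x j)]
  · simp

theorem dotProduct_signedAdj_allNeg_abs_le (hσ : ∀ e ∈ G.edgeSet, σ e = 1 ∨ σ e = -1)
    (x : V → ℝ) : |x| ⬝ᵥ signedAdj G (fun _ ↦ -1) *ᵥ |x| ≤ x ⬝ᵥ signedAdj G σ *ᵥ x := by
  simp only [← toBilin'_apply', toBilin'_apply, Pi.abs_apply]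
  exact Finset.sum_le_sum fun i _ ↦ Finset.sum_le_sum fun j _ ↦
    abs_mul_signedAdj_allNeg_mul_abs_le hσ x i j

theorem abs_dotProduct_abs (x : V → ℝ) : |x| ⬝ᵥ |x| = x ⬝ᵥ x := by
  simp only [dotProduct, Pi.abs_apply, abs_mul_abs_self]

variable [DecidableEq V]

theorem kirchhoff_isHermitian (G : SimpleGraph V) (σ : Sym2 V → ℤ) :
    (kirchhoff G σ).IsHermitian :=
  (isHermitian_diagonal _).sub (signedAdj_isHermitian G σ)

theorem dotProduct_diagonal_mulVec_abs (d x : V → ℝ) :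
    |x| ⬝ᵥ diagonal d *ᵥ |x| = x ⬝ᵥ diagonal d *ᵥ x := by
  simp only [dotProduct, mulVec_diagonal, Pi.abs_apply, mul_left_comm |x _|, abs_mul_abs_self,
    mul_left_comm (x _)]

theorem dotProduct_kirchhoff_mulVec_le_abs (hσ : ∀ e ∈ G.edgeSet, σ e = 1 ∨ σ e = -1)
    (x : V → ℝ) : x ⬝ᵥ kirchhoff G σ *ᵥ x ≤ |x| ⬝ᵥ kirchhoff G (fun _ ↦ -1) *ᵥ |x| := by
  simp only [kirchhoff, sub_mulVec, dotProduct_sub, dotProduct_diagonal_mulVec_abs]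
  linarith [dotProduct_signedAdj_allNeg_abs_le hσ x]

theorem mul_signedAdj_mul_eq_of_dotProduct_kirchhoff_eq
    (hσ : ∀ e ∈ G.edgeSet, σ e = 1 ∨ σ e = -1) {x : V → ℝ}
    (h : x ⬝ᵥ kirchhoff G σ *ᵥ x = |x| ⬝ᵥ kirchhoff G (fun _ ↦ -1) *ᵥ |x|) (i j : V) :
    x i * signedAdj G σ i j * x j = |x i| * signedAdj G (fun _ ↦ -1) i j * |x j| := by
  rw [kirchhoff, kirchhoff, sub_mulVec, sub_mulVec, dotProduct_sub, dotProduct_sub,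
    dotProduct_diagonal_mulVec_abs, sub_right_inj] at h
  simp only [← toBilin'_apply', toBilin'_apply, Pi.abs_apply, ← Fintype.sum_prod_type'] at h
  exact ((Finset.sum_eq_sum_iff_of_le fun p _ ↦
    abs_mul_signedAdj_allNeg_mul_abs_le hσ x p.1 p.2).mp h.symm (i, j) (Finset.mem_univ _)).symm

theorem diagonal_mul_kirchhoff_mul_diagonal {θ : V → ℤ} (hθ : ∀ v, θ v * θ v = 1)
    {τ : Sym2 V → ℤ} (hτ : ∀ ⦃u v⦄, G.Adj u v → τ s(u, v) = θ u * σ s(u, v) * θ v) :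
    diagonal (fun v ↦ (θ v : ℝ)) * kirchhoff G σ * diagonal (fun v ↦ (θ v : ℝ)) =
      kirchhoff G τ := by
  have hθ' (v : V) : (θ v : ℝ) * θ v = 1 := by exact_mod_cast hθ v
  ext u v
  simp only [diagonal_mul, mul_diagonal, kirchhoff, signedAdj, Matrix.sub_apply, of_apply]
  by_cases huv : u = v
  · subst huv
    simp [mul_comm _ (θ u : ℝ), ← mul_assoc, hθ']
  · by_cases h : G.Adj u v
    · simp [huv, h, hτ h]
    · simp [huv, h]

theorem eq_zero_of_adj_of_mulVec_kirchhoff_allNeg_eq {y : V → ℝ} (hy : 0 ≤ y) {μ : ℝ}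
    (h : kirchhoff G (fun _ ↦ -1) *ᵥ y = μ • y) {u v : V} (huv : G.Adj u v) (hu : y u = 0) :
    y v = 0 := by
  have hrow := congrFun h u
  rw [kirchhoff, sub_mulVec, Pi.sub_apply, mulVec_diagonal, Pi.smul_apply, hu, mul_zero,
    smul_zero, zero_sub, neg_eq_zero] at hrow
  simp only [signedAdj, mulVec, dotProduct, of_apply, ite_mul, zero_mul] at hrow
  have hterm := (Finset.sum_eq_zero_iff_of_nonpos fun w _ ↦ ?_).mp hrow v (Finset.mem_univ v)
  · simpa [huv] using hterm
  · split_ifs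
    · simpa using hy w
    · rfl

theorem pos_of_mulVec_kirchhoff_allNeg_eq (hG : G.Preconnected) {y : V → ℝ} (hy : 0 ≤ y)
    (hy0 : y ≠ 0) {μ : ℝ} (h : kirchhoff G (fun _ ↦ -1) *ᵥ y = μ • y) (v : V) : 0 < y v := by
  obtain ⟨u, hu⟩ := Function.ne_iff.mp hy0
  refine (hy v).lt_of_ne fun hv ↦ hu ?_
  exact (hG v u).induction_on_adj
    (fun _ _ hab ↦ eq_zero_of_adj_of_mulVec_kirchhoff_allNeg_eq hy h hab) hv.symm

theorem neg_eq_sign_mul_sign {s : ℤ} (hs : s = 1 ∨ s = -1) {a b : ℝ} (ha : a ≠ 0) (hb : b ≠ 0)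
    (h : a * s * b = |a| * -1 * |b|) :
    -s = (if 0 < a then 1 else -1) * (if 0 < b then 1 else -1) := by
  rcases hs with rfl | rfl <;> rcases ha.lt_or_gt with ha' | ha' <;>
    rcases hb.lt_or_gt with hb' | hb' <;>
    simp [ha', hb', ha'.not_gt, hb'.not_gt, abs_of_pos, abs_of_neg] at h ⊢ <;>
    exact mul_ne_zero ha hb (by linarith)

theorem maxEigen_kirchhoff_le [Nonempty V] (hσ : ∀ e ∈ G.edgeSet, σ e = 1 ∨ σ e = -1) :
    maxEigen (kirchhoff G σ) ≤ maxEigen (kirchhoff G (fun _ ↦ -1)) := by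
  obtain ⟨x, hx0, hx⟩ := (kirchhoff_isHermitian G σ).exists_mulVec_eq_maxEigen_smul
  have hxx : 0 < x ⬝ᵥ x := (Finset.sum_nonneg fun i _ ↦ mul_self_nonneg (x i)).lt_of_ne
    (Ne.symm (dotProduct_self_eq_zero.not.mpr hx0))
  refine le_of_mul_le_mul_right ?_ hxx
  calc maxEigen (kirchhoff G σ) * (x ⬝ᵥ x) = x ⬝ᵥ kirchhoff G σ *ᵥ x := by
        rw [hx, dotProduct_smul, smul_eq_mul]
    _ ≤ |x| ⬝ᵥ kirchhoff G (fun _ ↦ -1) *ᵥ |x| := dotProduct_kirchhoff_mulVec_le_abs hσ x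
    _ ≤ maxEigen (kirchhoff G (fun _ ↦ -1)) * (|x| ⬝ᵥ |x|) :=
        (kirchhoff_isHermitian G _).dotProduct_mulVec_le |x|
    _ = maxEigen (kirchhoff G (fun _ ↦ -1)) * (x ⬝ᵥ x) := by rw [abs_dotProduct_abs]

theorem isBalanced_neg_of_maxEigen_kirchhoff_eq (hG : G.Connected)
    (hσ : ∀ e ∈ G.edgeSet, σ e = 1 ∨ σ e = -1)
    (heq : maxEigen (kirchhoff G σ) = maxEigen (kirchhoff G (fun _ ↦ -1))) :
    IsBalanced G (fun e ↦ -σ e) := by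
  have := hG.nonempty
  obtain ⟨x, hx0, hx⟩ := (kirchhoff_isHermitian G σ).exists_mulVec_eq_maxEigen_smul
  have hform : x ⬝ᵥ kirchhoff G σ *ᵥ x = maxEigen (kirchhoff G (fun _ ↦ -1)) * (|x| ⬝ᵥ |x|) := by
    rw [hx, dotProduct_smul, smul_eq_mul, heq, abs_dotProduct_abs]
  have hle := dotProduct_kirchhoff_mulVec_le_abs hσ x
  have hmax := (kirchhoff_isHermitian G (fun _ ↦ -1)).dotProduct_mulVec_le |x|
  have habs_eig := (kirchhoff_isHermitian G (fun _ ↦ -1)).mulVec_eq_of_dotProduct_mulVec_eq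
    (by linarith)
  have hpos := pos_of_mulVec_kirchhoff_allNeg_eq hG.preconnected (fun v ↦ abs_nonneg (x v))
    (fun h ↦ hx0 (funext fun v ↦ abs_eq_zero.mp (congrFun h v))) habs_eig
  have hedge := mul_signedAdj_mul_eq_of_dotProduct_kirchhoff_eq hσ (by linarith)
  refine (isBalanced_iff_exists_potential fun e he ↦ ?_).mpr
    ⟨fun v ↦ if 0 < x v then 1 else -1, fun v ↦ by dsimp only; split_ifs <;> rfl, fun u v h ↦ ?_⟩
  · rcases hσ e he with h | h <;> simp [h]
  · have huv := hedge u v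
    simp only [signedAdj, of_apply, if_pos h] at huv
    exact neg_eq_sign_mul_sign (hσ _ h) (abs_pos.mp (hpos u)) (abs_pos.mp (hpos v))
      (by exact_mod_cast huv)

theorem maxEigen_kirchhoff_eq_of_isBalanced_neg (hσ : ∀ e ∈ G.edgeSet, σ e = 1 ∨ σ e = -1)
    (hbal : IsBalanced G (fun e ↦ -σ e)) :
    maxEigen (kirchhoff G σ) = maxEigen (kirchhoff G (fun _ ↦ -1)) := by
  have hneg (e) (he : e ∈ G.edgeSet) : -σ e * -σ e = 1 := by
    rcases hσ e he with h | h <;> simp [h]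
  obtain ⟨θ, hθ, hpot⟩ := (isBalanced_iff_exists_potential hneg).mp hbal
  have hD : diagonal (fun v ↦ (θ v : ℝ)) * diagonal (fun v ↦ (θ v : ℝ)) = 1 := by
    rw [diagonal_mul_diagonal, ← diagonal_one]
    exact congrArg diagonal (funext fun v ↦ by exact_mod_cast hθ v)
  rw [← diagonal_mul_kirchhoff_mul_diagonal hθ (τ := fun _ ↦ -1) fun u v h ↦ ?_, maxEigen_conj hD]
  linear_combination θ u * θ v * hpot h + θ v * θ v * hθ u + hθ v

end Kirchhoff

/-- For a connected graph `G` with any signature `σ`, the largest eigenvalue of the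
Kirchhoff matrix satisfies `λ¹(K(G, σ)) ≤ λ¹(K(-G))`, where `-G` is `G` with all edges
negative, with equality iff `(G, σ)` is antibalanced (i.e., `-Σ` is balanced). -/
theorem kirchhoff_max_eigenvalue_le_allNegative {V : Type*} [Fintype V] [DecidableEq V]
    (G : SimpleGraph V) (hconn : G.Connected)
    (σ : Sym2 V → ℤ) (hσ : ∀ e ∈ G.edgeSet, σ e = 1 ∨ σ e = -1) :
    maxEigen (kirchhoff G σ) ≤ maxEigen (kirchhoff G (fun _ => -1)) ∧
    (maxEigen (kirchhoff G σ) = maxEigen (kirchhoff G (fun _ => -1)) ↔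
      IsBalanced G (fun e => -σ e)) := by
  have := hconn.nonempty
  exact ⟨maxEigen_kirchhoff_le hσ, isBalanced_neg_of_maxEigen_kirchhoff_eq hconn hσ,
    maxEigen_kirchhoff_eq_of_isBalanced_neg hσ⟩
end
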